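/- arXiv:1808.05048 — 2 statements merged into one kernel-verified Lean document; each statement's English description precedes it below -/
import Mathlib

section
/- With the notation of the previous statement, the adjoint of the complementary channel of a Schur product channel satisfies Φ^{C†}(X) = Σ_{i=1}^n (wᵢᵀ X conj(wᵢ)) E_{ii}: its output is diagonal with entries given by the quadratic forms of X against the conjugated Gram vectors. -/
/-! `Φ^C(X)` only reads the diagonal of `X`, so its adjoint takes values in diagonal matrices.
Writing both sides of `⟨Φ^C(X), Y⟩ = ⟨X, Φ^{C†}(Y)⟩` entrywise, each becomes
`∑ k a b, conj(X k k) * w k a * Y a b * conj(w k b)`. -/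

open Matrix ComplexOrder

namespace Matrix

variable {ι κ R : Type*} [Fintype ι] [Fintype κ]

section Single

variable [DecidableEq ι] [DecidableEq κ] [Semiring R]

theorem sum_sum_smul_single_one (c : ι → κ → R) :
    ∑ i, ∑ j, c i j • single i j (1 : R) = of c := by
  simp_rw [smul_single, smul_eq_mul, mul_one]
  exact (matrix_eq_sum_single (of c)).symm

theorem sum_smul_single_one_same (d : ι → R) :
    ∑ i, d i • single i i (1 : R) = diagonal d := by
  simp_rw [smul_single, smul_eq_mul, mul_one]
  exact sum_single_eq_diagonal d

end Single

theorem trace_conjTranspose_diagonal_mul_diagonal_mul [DecidableEq κ] [Semiring R] [StarRing R]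
    (u v : κ → R) (X : Matrix κ κ R) :
    ((diagonal u)ᴴ * diagonal v * X).trace = ∑ k, star (u k) * v k * X k k := by
  simp [trace, diagonal_conjTranspose, diagonal_mul_diagonal, diagonal_mul]

theorem trace_conjTranspose_mul_eq_sum [Semiring R] [StarRing R] (A B : Matrix ι κ R) :
    (Aᴴ * B).trace = ∑ i, ∑ j, star (A i j) * B i j := by
  simp only [trace, diag, mul_apply, conjTranspose_apply]
  exact Finset.sum_comm

end Matrix

/-- The complementary channel `Φ^C(X) = ∑ i j, Tr(D_{vⱼ}* D_{vᵢ} X) E_{ij}`, written entrywise. -/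
def schurComplementary {ι κ R : Type*} [Fintype κ] [Star R] [Mul R] [AddCommMonoid R]
    (v : ι → κ → R) (X : Matrix κ κ R) : Matrix ι ι R :=
  of fun i j => ∑ k, star (v j k) * v i k * X k k

def schurComplementaryAdjoint {ι κ R : Type*} [Fintype κ] [DecidableEq ι] [Star R] [Mul R]
    [AddCommMonoid R] (w : ι → κ → R) (Y : Matrix κ κ R) : Matrix ι ι R :=
  diagonal fun i => ∑ a, ∑ b, w i a * Y a b * star (w i b)

theorem trace_conjTranspose_schurComplementary_mul {ι κ R : Type*} [Fintype ι] [Fintype κ]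
    [DecidableEq ι] [CommSemiring R] [StarRing R] (w : ι → κ → R) (X : Matrix ι ι R)
    (Y : Matrix κ κ R) :
    ((schurComplementary (fun a i => star (w i a)) X)ᴴ * Y).trace =
      (Xᴴ * schurComplementaryAdjoint w Y).trace := by
  simp only [trace_conjTranspose_mul_eq_sum, schurComplementary, schurComplementaryAdjoint,
    of_apply, diagonal_apply, star_sum, star_mul', star_star, mul_ite, mul_zero,
    Finset.sum_ite_eq, Finset.mem_univ, if_true, Finset.mul_sum, Finset.sum_mul]
  conv_lhs => enter [2, a]; rw [Finset.sum_comm]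
  rw [Finset.sum_comm]
  exact Fintype.sum_congr _ _ fun k => Fintype.sum_congr _ _ fun a =>
    Fintype.sum_congr _ _ fun b => by ring

theorem stmt12_general {n p : ℕ} (w : Fin n → Fin p → ℂ)
    (v : Fin p → Fin n → ℂ) (hv : ∀ i j, v i j = star (w j i))
    (X : Matrix (Fin n) (Fin n) ℂ) (Y : Matrix (Fin p) (Fin p) ℂ) :
    ((∑ i : Fin p, ∑ j : Fin p,
        ((Matrix.diagonal (v j))ᴴ * Matrix.diagonal (v i) * X).trace •
          Matrix.single i j (1 : ℂ))ᴴ * Y).trace =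
      (Xᴴ * ∑ i : Fin n,
        (∑ a, ∑ b, w i a * Y a b * star (w i b)) •
          Matrix.single i i (1 : ℂ)).trace := by
  obtain rfl : v = fun i j => star (w j i) := funext₂ hv
  simp only [trace_conjTranspose_diagonal_mul_diagonal_mul, sum_sum_smul_single_one,
    sum_smul_single_one_same]
  exact trace_conjTranspose_schurComplementary_mul w X Y

theorem stmt12 {n p : ℕ} (C : Matrix (Fin n) (Fin n) ℂ) (hC : C.PosSemidef)
    (hdiag : ∀ i, C i i = 1)
    (w : Fin n → Fin p → ℂ) (hGram : ∀ i j, ∑ k, star (w i k) * w j k = C i j)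
    (v : Fin p → Fin n → ℂ) (hv : ∀ i j, v i j = star (w j i))
    (X : Matrix (Fin n) (Fin n) ℂ) (Y : Matrix (Fin p) (Fin p) ℂ) :
    ((∑ i : Fin p, ∑ j : Fin p,
        ((Matrix.diagonal (v j))ᴴ * Matrix.diagonal (v i) * X).trace •
          Matrix.single i j (1 : ℂ))ᴴ * Y).trace =
      (Xᴴ * ∑ i : Fin n,
        (∑ a, ∑ b, w i a * Y a b * star (w i b)) •
          Matrix.single i i (1 : ℂ)).trace :=
  stmt12_general w v hv X Y
end

section
/- Let Φ be a trace-preserving CP map on Mₙ(ℂ) with Kraus operators K₁,…,K_p, and let Q ∈ M_{r,p}(ℂ) satisfy Φ^{C†}(Q*Q) = Iₙ. Then the operators K̂_k = Σⱼ q_{kj} Kⱼ (k = 1,…,r) define a trace-preserving CP map Φ̂(X) = Σ_k K̂_k X K̂_k*, and the kernel of the Choi matrix C_Φ is contained in the kernel of C_{Φ̂}. -/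
/-! The Choi matrix of `X ↦ ∑ₗ Kₗ X Kₗᴴ` factors as `V Vᴴ`, where the columns of `V` are the
vectorised Kraus operators, so its kernel is the kernel of `Vᴴ`. Replacing the Kraus family by the
combinations `K̂ₖ = ∑ⱼ qₖⱼ Kⱼ` replaces `V` by `V Qᵀ`, hence `Vᴴ` by `Q̄ Vᴴ`, whose kernel can only
be larger. Trace preservation of the new family is a rearrangement of the double sum defining
`Φ^{C†}(QᴴQ)`. -/

open Matrix Kronecker

namespace Matrix

variable {R : Type*} [CommRing R] {m n ι κ : Type*} [Fintype ι]

/-- Column `l` is `Kₗ` read column after column: the row index `(a, b)` picks the entry `Kₗ b a`,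
matching the ordering of `E_{ab} ⊗ Φ(E_{ab})` in the Choi matrix. -/
def krausColumns (K : ι → Matrix m m R) : Matrix (m × m) ι R :=
  of fun ab l => K l ab.2 ab.1

theorem krausColumns_linearCombination (K : ι → Matrix m m R) (Q : Matrix κ ι R) :
    krausColumns (fun l => ∑ j, Q l j • K j) = krausColumns K * Qᵀ := by
  ext ab l
  simp [krausColumns, mul_apply, Matrix.sum_apply, mul_comm]

variable [StarRing R] [Fintype m]

theorem sum_conjTranspose_mul_linearCombination [Fintype κ] (K : ι → Matrix m n R)
    (Q : Matrix κ ι R) :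
    ∑ l, (∑ j, Q l j • K j)ᴴ * ∑ j, Q l j • K j = ∑ i, ∑ j, (Qᴴ * Q) i j • ((K i)ᴴ * K j) := by
  simp only [conjTranspose_sum, conjTranspose_smul, Matrix.sum_mul, Matrix.mul_sum,
    Matrix.smul_mul, Matrix.mul_smul, Finset.smul_sum, smul_smul, mul_apply, conjTranspose_apply,
    Finset.sum_smul]
  rw [Finset.sum_comm]
  conv_rhs => rw [Finset.sum_comm]
  refine Finset.sum_congr rfl fun _ _ => ?_
  rw [Finset.sum_comm]
  simp only [mul_comm]

variable [DecidableEq m]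

def choiMatrix (K : ι → Matrix m m R) : Matrix (m × m) (m × m) R :=
  ∑ i, ∑ j, single i j (1 : R) ⊗ₖ ∑ l, K l * single i j 1 * (K l)ᴴ

theorem choiMatrix_eq_krausColumns_mul_conjTranspose (K : ι → Matrix m m R) :
    choiMatrix K = krausColumns K * (krausColumns K)ᴴ := by
  ext ⟨a, b⟩ ⟨c, d⟩
  simp [choiMatrix, krausColumns, Matrix.sum_apply, kroneckerMap_apply, single, mul_apply,
    Finset.mul_sum, ite_and, apply_ite]

theorem choiMatrix_linearCombination_mulVec_eq_zero [Fintype κ] [PartialOrder R]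
    [StarOrderedRing R] [NoZeroDivisors R] (K : ι → Matrix m m R) (Q : Matrix κ ι R)
    {x : m × m → R} (hx : choiMatrix K *ᵥ x = 0) :
    choiMatrix (fun l => ∑ j, Q l j • K j) *ᵥ x = 0 := by
  rw [choiMatrix_eq_krausColumns_mul_conjTranspose, self_mul_conjTranspose_mulVec_eq_zero] at hx
  rw [choiMatrix_eq_krausColumns_mul_conjTranspose, krausColumns_linearCombination,
    conjTranspose_mul, Matrix.mul_assoc]
  simp only [← mulVec_mulVec, hx, mulVec_zero]

end Matrix

theorem stmt17_general {n p r : ℕ} (K : Fin p → Matrix (Fin n) (Fin n) ℂ)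
    (Q : Matrix (Fin r) (Fin p) ℂ)
    (hQ : ∑ i : Fin p, ∑ j : Fin p, (Qᴴ * Q) i j • ((K i)ᴴ * K j) = 1) :
    (∑ l : Fin r, (∑ j, Q l j • K j)ᴴ * ∑ j, Q l j • K j = 1) ∧
      ∀ x : Fin n × Fin n → ℂ,
        (∑ i : Fin n, ∑ j : Fin n, Matrix.single i j (1 : ℂ) ⊗ₖ
            ∑ l : Fin p, K l * Matrix.single i j 1 * (K l)ᴴ).mulVec x = 0 →
        (∑ i : Fin n, ∑ j : Fin n, Matrix.single i j (1 : ℂ) ⊗ₖ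
            ∑ l : Fin r, (∑ a, Q l a • K a) * Matrix.single i j 1 *
              (∑ a, Q l a • K a)ᴴ).mulVec x = 0 :=
  open ComplexOrder in
  ⟨(sum_conjTranspose_mul_linearCombination K Q).trans hQ,
    fun _ hx => choiMatrix_linearCombination_mulVec_eq_zero K Q hx⟩

theorem stmt17 {n p r : ℕ} (K : Fin p → Matrix (Fin n) (Fin n) ℂ)
    (hTP : ∑ i, (K i)ᴴ * K i = 1) (Q : Matrix (Fin r) (Fin p) ℂ)
    (hQ : ∑ i : Fin p, ∑ j : Fin p, (Qᴴ * Q) i j • ((K i)ᴴ * K j) = 1) :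
    (∑ l : Fin r, (∑ j, Q l j • K j)ᴴ * ∑ j, Q l j • K j = 1) ∧
      ∀ x : Fin n × Fin n → ℂ,
        (∑ i : Fin n, ∑ j : Fin n, Matrix.single i j (1 : ℂ) ⊗ₖ
            ∑ l : Fin p, K l * Matrix.single i j 1 * (K l)ᴴ).mulVec x = 0 →
        (∑ i : Fin n, ∑ j : Fin n, Matrix.single i j (1 : ℂ) ⊗ₖ
            ∑ l : Fin r, (∑ a, Q l a • K a) * Matrix.single i j 1 *
              (∑ a, Q l a • K a)ᴴ).mulVec x = 0 :=
  stmt17_general K Q hQ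
end
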